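/- arXiv:2501.18518 — 4 statements merged into one kernel-verified Lean document; each statement's English description precedes it below -/
import Mathlib

section
/- Reynolds Transport Theorem in ℝⁿ: Let χ : [0,T] × ℝⁿ → ℝⁿ be smooth with χ(0,·) = id, each map χᵗ = χ(t,·) a diffeomorphism of ℝⁿ, and velocity field v defined by v(t, χ(t,y)) = ∂χ/∂t(t,y). Let V(0) ⊆ ℝⁿ be a bounded open set, V(t) = χᵗ(V(0)), and let ψ : [0,T] × ℝⁿ → ℝ be continuously differentiable. Then t ↦ ∫_{V(t)} ψ(t,x) dx is differentiable and d/dt ∫_{V(t)} ψ(t,x) dx = ∫_{V(t)} [∂ψ/∂t + div_x(ψ v)](t,x) dx. -/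
/-!
Pull the integral back to the fixed domain `V0` by the change of variables `x = χ s y`, whose
Jacobian `det ∂ᵧχ(s, y)` never vanishes because `χ s` has a differentiable inverse. The pulled-back
integrand `|det ∂ᵧχ(s, y)| ψ(s, χ(s, y))` is jointly `C¹`, so it can be differentiated under the
integral over the bounded set `V0`. Since mixed partials commute, `∂ₛ ∂ᵧχ = Dv(χ) ∘ ∂ᵧχ`, and
Jacobi's formula `d(det A) = tr (adj A · dA)` turns this into Liouville's formula
`∂ₛ det ∂ᵧχ = det ∂ᵧχ · (div v)(χ)`. With the chain rule for `ψ(s, χ(s, y))` the `s`-derivative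
of the integrand is `|det ∂ᵧχ| (∂ₜψ + div (ψ v))(s, χ(s, y))`, and changing variables back gives
the claim.
-/

open ContDiff Finset Function Matrix MeasureTheory

theorem Matrix.hasDerivAt_det {𝕜 ι : Type*} [NontriviallyNormedField 𝕜] [Fintype ι]
    [DecidableEq ι] {M : 𝕜 → Matrix ι ι 𝕜} {M' : Matrix ι ι 𝕜} {t : 𝕜}
    (hM : ∀ i j, HasDerivAt (fun s => M s i j) (M' i j) t) :
    HasDerivAt (fun s => (M s).det) ((M t).adjugate * M').trace t := by
  have hprod (σ : Equiv.Perm ι) := HasDerivAt.fun_finsetProd (u := univ)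
    (fun i _ => hM (σ i) i)
  simp_rw [det_apply']
  refine (HasDerivAt.fun_sum (u := univ) fun σ _ => (hprod σ).const_mul
    (((Equiv.Perm.sign σ : ℤ) : 𝕜))).congr_deriv (Eq.symm ?_)
  have hcol (i : ι) (σ : Equiv.Perm ι) :
      ∏ j, (M t).updateCol i (fun k => M' k i) (σ j) j
        = (∏ j ∈ univ.erase i, M t (σ j) j) * M' (σ i) i := by
    rw [← mul_prod_erase _ _ (mem_univ i), mul_comm]
    congr 1
    · exact prod_congr rfl fun j hj => by simp [ne_of_mem_erase hj]
    · simp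
  calc ((M t).adjugate * M').trace
      = ∑ i, ((M t).adjugate *ᵥ fun k => M' k i) i := by
        simp only [trace, diag, mul_apply, mulVec, dotProduct]
    _ = ∑ i, ((M t).updateCol i fun k => M' k i).det := by
        simp_rw [← cramer_eq_adjugate_mulVec, cramer_apply]
    _ = _ := by
        simp_rw [det_apply', hcol, smul_eq_mul, mul_sum]
        rw [sum_comm]

theorem Matrix.trace_adjugate_mul_mul_self {R ι : Type*} [CommRing R] [Fintype ι]
    [DecidableEq ι] (A B : Matrix ι ι R) : (A.adjugate * (B * A)).trace = A.det * B.trace := by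
  rw [← mul_assoc, trace_mul_cycle, mul_adjugate, smul_mul, one_mul, trace_smul, smul_eq_mul]

section Coordinates

variable {𝕜 ι : Type*} [NontriviallyNormedField 𝕜] [Fintype ι] [DecidableEq ι]

theorem ContDiff.clm_det {X : Type*} [NormedAddCommGroup X] [NormedSpace 𝕜 X] {n : WithTop ℕ∞}
    {f : X → (ι → 𝕜) →L[𝕜] (ι → 𝕜)} (hf : ContDiff 𝕜 n f) :
    ContDiff 𝕜 n (fun x => (f x).det) := by
  have hentry (i j : ι) : ContDiff 𝕜 n (fun x => f x (Pi.single j 1) i) :=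
    (contDiff_apply 𝕜 𝕜 i).comp (hf.clm_apply contDiff_const)
  simp_rw [ContinuousLinearMap.det, ← LinearMap.det_toMatrix', Matrix.det_apply',
    LinearMap.toMatrix'_apply]
  exact ContDiff.sum fun σ _ => contDiff_const.mul (contDiff_prod fun i _ => hentry _ _)

theorem ContinuousLinearMap.hasDerivAt_det_of_hasDerivAt_comp
    {J : 𝕜 → (ι → 𝕜) →L[𝕜] (ι → 𝕜)} {L : (ι → 𝕜) →L[𝕜] (ι → 𝕜)} {t : 𝕜}
    (hJ : HasDerivAt J (L.comp (J t)) t) :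
    HasDerivAt (fun s => (J s).det)
      ((J t).det * LinearMap.trace 𝕜 _ (L : (ι → 𝕜) →ₗ[𝕜] ι → 𝕜)) t := by
  have hentry (i j : ι) :
      HasDerivAt (fun s => LinearMap.toMatrix' (J s : (ι → 𝕜) →ₗ[𝕜] ι → 𝕜) i j)
        (LinearMap.toMatrix' ((L.comp (J t) : (ι → 𝕜) →L[𝕜] ι → 𝕜) :
          (ι → 𝕜) →ₗ[𝕜] ι → 𝕜) i j) t :=
    hasDerivAt_pi.1 ((ContinuousLinearMap.apply 𝕜 (ι → 𝕜)
      (Pi.single j 1)).hasFDerivAt.comp_hasDerivAt t hJ) i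
  convert Matrix.hasDerivAt_det hentry using 1
  · simp only [ContinuousLinearMap.det, LinearMap.det_toMatrix']
  · rw [ContinuousLinearMap.toLinearMap_comp, LinearMap.toMatrix'_comp,
      Matrix.trace_adjugate_mul_mul_self, LinearMap.det_toMatrix',
      LinearMap.trace_eq_matrix_trace 𝕜 (Pi.basisFun 𝕜 ι), LinearMap.toMatrix_eq_toMatrix']

noncomputable def divergence (F : (ι → 𝕜) → ι → 𝕜) (x : ι → 𝕜) : 𝕜 :=
  ∑ i, fderiv 𝕜 (fun y => F y i) x (Pi.single i 1)

theorem divergence_eq_trace {F : (ι → 𝕜) → ι → 𝕜} {x : ι → 𝕜}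
    (hF : DifferentiableAt 𝕜 F x) :
    divergence F x = LinearMap.trace 𝕜 _ (fderiv 𝕜 F x : (ι → 𝕜) →ₗ[𝕜] ι → 𝕜) := by
  rw [LinearMap.trace_eq_matrix_trace 𝕜 (Pi.basisFun 𝕜 ι), LinearMap.toMatrix_eq_toMatrix']
  simp [divergence, fderiv_apply hF, Matrix.trace]

theorem divergence_smul {φ : (ι → 𝕜) → 𝕜} {F : (ι → 𝕜) → ι → 𝕜} {x : ι → 𝕜}
    (hφ : DifferentiableAt 𝕜 φ x) (hF : DifferentiableAt 𝕜 F x) :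
    divergence (fun y => φ y • F y) x = fderiv 𝕜 φ x (F x) + φ x * divergence F x := by
  have hφF : fderiv 𝕜 φ x (F x) = ∑ i, F x i * fderiv 𝕜 φ x (Pi.single i 1) := by
    conv_lhs => rw [← univ_sum_single (F x)]
    rw [map_sum]
    refine sum_congr rfl fun i _ => ?_
    rw [← smul_eq_mul, ← map_smul, ← Pi.single_smul', smul_eq_mul, mul_one]
  simp only [divergence, Pi.smul_apply, smul_eq_mul]
  simp_rw [fderiv_fun_mul hφ (differentiableAt_pi.1 hF _)]
  simp only [_root_.add_apply, _root_.smul_apply, smul_eq_mul, sum_add_distrib,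
    mul_sum, hφF]
  ring

end Coordinates

theorem det_fderiv_ne_zero_of_leftInverse {𝕜 E : Type*} [NontriviallyNormedField 𝕜]
    [NormedAddCommGroup E] [NormedSpace 𝕜 E] {f g : E → E} {x : E}
    (hgf : LeftInverse g f) (hf : DifferentiableAt 𝕜 f x) (hg : DifferentiableAt 𝕜 g (f x)) :
    (fderiv 𝕜 f x).det ≠ 0 := by
  have hid : (fderiv 𝕜 g (f x)).comp (fderiv 𝕜 f x) = ContinuousLinearMap.id 𝕜 E := by
    rw [← fderiv_comp x hg hf, show g ∘ f = id from funext hgf, fderiv_id]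
  intro h
  simpa [ContinuousLinearMap.det, h] using congrArg ContinuousLinearMap.det hid

section Partial

variable {𝕜 E F : Type*} [NontriviallyNormedField 𝕜] [NormedAddCommGroup E] [NormedSpace 𝕜 E]
  [NormedAddCommGroup F] [NormedSpace 𝕜 F]

theorem DifferentiableAt.fderiv_uncurry_apply {Φ : 𝕜 → E → F} {s : 𝕜} {y : E}
    (h : DifferentiableAt 𝕜 (uncurry Φ) (s, y)) (a : 𝕜) (w : E) :
    fderiv 𝕜 (uncurry Φ) (s, y) (a, w) = a • deriv (Φ · y) s + fderiv 𝕜 (Φ s) y w := by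
  have htime : HasDerivAt (Φ · y) (fderiv 𝕜 (uncurry Φ) (s, y) (1, 0)) s := by
    have := (h.hasFDerivAt.comp s (hasFDerivAt_prodMk_left (𝕜 := 𝕜) s y)).hasDerivAt
    exact this
  have hspace : HasFDerivAt (Φ s) ((fderiv 𝕜 (uncurry Φ) (s, y)).comp
      (ContinuousLinearMap.inr 𝕜 𝕜 E)) y :=
    h.hasFDerivAt.comp y (hasFDerivAt_prodMk_right s y)
  rw [htime.deriv, hspace.fderiv, ← map_smul, ContinuousLinearMap.comp_apply,
    ContinuousLinearMap.inr_apply, ← map_add]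
  simp

theorem DifferentiableAt.hasDerivAt_uncurry_comp {Φ : 𝕜 → E → F} {γ : 𝕜 → E} {γ' : E} {t : 𝕜}
    (hΦ : DifferentiableAt 𝕜 (uncurry Φ) (t, γ t)) (hγ : HasDerivAt γ γ' t) :
    HasDerivAt (fun s => Φ s (γ s)) (deriv (Φ · (γ t)) t + fderiv 𝕜 (Φ t) (γ t) γ') t := by
  have := hΦ.hasFDerivAt.comp_hasDerivAt t ((hasDerivAt_id t).prodMk hγ)
  rwa [hΦ.fderiv_uncurry_apply, one_smul] at this

end Partial

section RealPartial

variable {E F : Type*} [NormedAddCommGroup E] [NormedSpace ℝ E]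
  [NormedAddCommGroup F] [NormedSpace ℝ F] {Φ : ℝ → E → F}

theorem ContDiff.deriv_partial {m : WithTop ℕ∞} (hΦ : ContDiff ℝ (m + 1) (uncurry Φ)) :
    ContDiff ℝ m (fun p : ℝ × E => deriv (Φ · p.2) p.1) := by
  have h : ContDiff ℝ (m + 1) (uncurry fun (p : ℝ × E) (s : ℝ) => Φ s p.2) :=
    hΦ.comp (contDiff_snd.prodMk (contDiff_snd.comp contDiff_fst))
  exact (h.fderiv contDiff_fst le_rfl).clm_apply contDiff_const

theorem ContDiff.fderiv_partial {m : WithTop ℕ∞} (hΦ : ContDiff ℝ (m + 1) (uncurry Φ)) :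
    ContDiff ℝ m (fun p : ℝ × E => fderiv ℝ (Φ p.1) p.2) := by
  have h : ContDiff ℝ (m + 1) (uncurry fun (p : ℝ × E) (z : E) => Φ p.1 z) :=
    hΦ.comp ((contDiff_fst.comp contDiff_fst).prodMk contDiff_snd)
  exact h.fderiv contDiff_snd le_rfl

theorem ContDiff.hasDerivAt_fderiv_partial (hΦ : ContDiff ℝ 2 (uncurry Φ)) (t : ℝ) (y : E) :
    HasDerivAt (fun s => fderiv ℝ (Φ s) y) (fderiv ℝ (fun z => deriv (Φ · z) t) y) t := by
  set D := fderiv ℝ (uncurry Φ)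
  have hΦd : Differentiable ℝ (uncurry Φ) := hΦ.differentiable two_ne_zero
  have hDd : Differentiable ℝ D := (hΦ.fderiv_right (m := 1) le_rfl).differentiable one_ne_zero
  have hsymm : IsSymmSndFDerivAt ℝ (uncurry Φ) (t, y) :=
    hΦ.contDiffAt.isSymmSndFDerivAt (by simp)
  have hspace (s : ℝ) : fderiv ℝ (Φ s) y = (D (s, y)).comp (ContinuousLinearMap.inr ℝ ℝ E) :=
    ((hΦd _).hasFDerivAt.comp y (hasFDerivAt_prodMk_right s y)).fderiv
  have htime (z : E) : deriv (Φ · z) t = D (t, z) (1, 0) := by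
    simpa using ((hΦd (t, z)).fderiv_uncurry_apply 1 0).symm
  have hline : HasDerivAt (fun s => D (s, y)) (fderiv ℝ D (t, y) (1, 0)) t := by
    have := ((hDd _).hasFDerivAt.comp t (hasFDerivAt_prodMk_left (𝕜 := ℝ) t y)).hasDerivAt
    exact this
  have hcross : HasFDerivAt (fun z => D (t, z) (1, 0))
      (((fderiv ℝ D (t, y)).comp (ContinuousLinearMap.inr ℝ ℝ E)).flip (1, 0)) y := by
    have := ((hDd _).hasFDerivAt.comp y (hasFDerivAt_prodMk_right t y)).clm_apply
      (hasFDerivAt_const ((1 : ℝ), (0 : E)) y)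
    simpa using this
  simp_rw [hspace, htime, hcross.fderiv]
  refine (hline.clm_comp (hasDerivAt_const t _)).congr_deriv ?_
  ext w
  simpa using hsymm (1, 0) (0, w)

theorem ContDiff.differentiable_velocity {χ : ℝ → E → E} {v : E → E} {t : ℝ}
    (hχ : ContDiff ℝ 2 (uncurry χ)) {g : E → E}
    (hg : RightInverse g (χ t)) (hgd : Differentiable ℝ g)
    (hv : ∀ y, HasDerivAt (χ · y) (v (χ t y)) t) : Differentiable ℝ v := by
  have hvg : v = (fun z => deriv (χ · z) t) ∘ g := funext fun x => by
    simp [(hv (g x)).deriv, hg x]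
  rw [hvg]
  exact ((hχ.deriv_partial (m := 1)).differentiable one_ne_zero).comp
    ((differentiable_const t).prodMk differentiable_id) |>.comp hgd

end RealPartial

theorem hasDerivAt_setIntegral_of_contDiff {E G : Type*} [NormedAddCommGroup E]
    [NormedSpace ℝ E] [ProperSpace E] [MeasurableSpace E] [BorelSpace E]
    [NormedAddCommGroup G] [NormedSpace ℝ G] {μ : Measure E} [IsFiniteMeasureOnCompacts μ]
    {F : ℝ → E → G} (hF : ContDiff ℝ 1 (uncurry F)) {V : Set E} (hVm : MeasurableSet V)
    (hVb : Bornology.IsBounded V) (t : ℝ) :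
    HasDerivAt (fun s => ∫ y in V, F s y ∂μ) (∫ y in V, deriv (F · y) t ∂μ) t := by
  have hF' : Continuous (fun p : ℝ × E => deriv (F · p.2) p.1) :=
    (ContDiff.deriv_partial (m := 0) hF).continuous
  have hslice {f : ℝ × E → G} (hf : Continuous f) (s : ℝ) : Continuous (fun y => f (s, y)) :=
    hf.comp (continuous_const.prodMk continuous_id)
  have hK : IsCompact (Metric.closedBall t 1 ×ˢ closure V) :=
    (isCompact_closedBall t 1).prod hVb.isCompact_closure
  obtain ⟨M, hM⟩ := hK.exists_bound_of_continuousOn hF'.continuousOn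
  have hμV : μ V < ⊤ :=
    (measure_mono subset_closure).trans_lt hVb.isCompact_closure.measure_lt_top
  refine (hasDerivAt_integral_of_dominated_loc_of_deriv_le (F' := fun s y => deriv (F · y) s)
    (bound := fun _ => M) (Metric.closedBall_mem_nhds t one_pos)
    (.of_forall fun s => (hslice hF.continuous s).aestronglyMeasurable)
    (((hslice hF.continuous t).continuousOn.integrableOn_compact
      hVb.isCompact_closure).mono_set subset_closure)
    (hslice hF' t).aestronglyMeasurable ?_ (integrableOn_const hμV.ne)
    (.of_forall fun y s _ => ?_)).2
  · filter_upwards [ae_restrict_mem hVm] with y hy s hs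
    exact hM (s, y) ⟨hs, subset_closure hy⟩
  · exact ((hF.differentiable one_ne_zero (s, y)).comp s
      (hasFDerivAt_prodMk_left s y).differentiableAt).hasDerivAt

section Flow

variable {ι : Type*} [Fintype ι] [DecidableEq ι] {χ : ℝ → (ι → ℝ) → ι → ℝ}
  {v : (ι → ℝ) → ι → ℝ} {t : ℝ}

theorem ContDiff.hasDerivAt_det_fderiv (hχ : ContDiff ℝ 2 (uncurry χ))
    (hv : ∀ z, HasDerivAt (χ · z) (v (χ t z)) t) {y : ι → ℝ}
    (hvd : DifferentiableAt ℝ v (χ t y)) :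
    HasDerivAt (fun s => (fderiv ℝ (χ s) y).det)
      ((fderiv ℝ (χ t) y).det * divergence v (χ t y)) t := by
  have hχd : DifferentiableAt ℝ (χ t) y :=
    (hχ.comp (contDiff_prodMk_right t)).differentiable two_ne_zero y
  have hvχ : fderiv ℝ (fun z => deriv (χ · z) t) y
      = (fderiv ℝ v (χ t y)).comp (fderiv ℝ (χ t) y) := by
    rw [show (fun z => deriv (χ · z) t) = v ∘ χ t from funext fun z => (hv z).deriv,
      fderiv_comp y hvd hχd]
  rw [divergence_eq_trace hvd]
  exact ContinuousLinearMap.hasDerivAt_det_of_hasDerivAt_comp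
    (hvχ ▸ hχ.hasDerivAt_fderiv_partial t y)

theorem ContDiff.abs_det_fderiv {m : ℕ∞} (hχ : ContDiff ℝ (m + 1) (uncurry χ))
    (hdet : ∀ s y, (fderiv ℝ (χ s) y).det ≠ 0) :
    ContDiff ℝ m (fun p : ℝ × (ι → ℝ) => |(fderiv ℝ (χ p.1) p.2).det|) :=
  contDiff_iff_contDiffAt.2 fun p =>
    (hχ.fderiv_partial.clm_det.contDiffAt).abs (hdet p.1 p.2)

theorem ContDiff.hasDerivAt_abs_det_fderiv_mul (hχ : ContDiff ℝ 2 (uncurry χ))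
    (hv : ∀ z, HasDerivAt (χ · z) (v (χ t z)) t) {y : ι → ℝ}
    (hvd : DifferentiableAt ℝ v (χ t y)) (hdet : (fderiv ℝ (χ t) y).det ≠ 0)
    {ψ : ℝ → (ι → ℝ) → ℝ} (hψ : DifferentiableAt ℝ (uncurry ψ) (t, χ t y)) :
    HasDerivAt (fun s => |(fderiv ℝ (χ s) y).det| * ψ s (χ s y))
      (|(fderiv ℝ (χ t) y).det| *
        (deriv (ψ · (χ t y)) t + divergence (fun x => ψ t x • v x) (χ t y))) t := by
  have hψt : DifferentiableAt ℝ (ψ t) (χ t y) :=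
    hψ.comp (χ t y) (differentiableAt_const t |>.prodMk differentiableAt_id)
  refine (((hasDerivAt_abs hdet).comp t (hχ.hasDerivAt_det_fderiv hv hvd)).mul
    (hψ.hasDerivAt_uncurry_comp (hv y))).congr_deriv ?_
  rw [divergence_smul hψt hvd, Function.comp_apply]
  linear_combination divergence v (χ t y) * ψ t (χ t y) * sign_mul_self (fderiv ℝ (χ t) y).det

end Flow

theorem reynolds_transport_general
    (n : ℕ) (T : ℝ)
    (χ : ℝ → (Fin n → ℝ) → (Fin n → ℝ))
    (χinv : ℝ → (Fin n → ℝ) → (Fin n → ℝ))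
    (hχ : ContDiff ℝ ∞ (fun p : ℝ × (Fin n → ℝ) => χ p.1 p.2))
    (hleft : ∀ t, Function.LeftInverse (χinv t) (χ t))
    (hright : ∀ t, Function.RightInverse (χinv t) (χ t))
    (hχinv : ∀ t, ContDiff ℝ ∞ (χinv t))
    (v : ℝ → (Fin n → ℝ) → (Fin n → ℝ))
    (hv : ∀ t y, HasDerivAt (fun s => χ s y) (v t (χ t y)) t)
    (V0 : Set (Fin n → ℝ)) (hV0open : IsOpen V0) (hV0bdd : Bornology.IsBounded V0)
    (ψ : ℝ → (Fin n → ℝ) → ℝ)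
    (hψ : ContDiff ℝ 1 (fun p : ℝ × (Fin n → ℝ) => ψ p.1 p.2)) :
    ∀ t ∈ Set.Icc 0 T,
      HasDerivAt (fun s => ∫ x in χ s '' V0, ψ s x)
        (∫ x in χ t '' V0,
          (deriv (fun s => ψ s x) t +
            ∑ i, fderiv ℝ (fun y => ψ t y * v t y i) x (Pi.single i 1))) t := by
  intro t _
  have hχ2 : ContDiff ℝ 2 (uncurry χ) := hχ.of_le (by norm_cast)
  have hχd (s : ℝ) : Differentiable ℝ (χ s) :=
    (hχ2.comp (contDiff_prodMk_right s)).differentiable two_ne_zero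
  have hdet (s y) : (fderiv ℝ (χ s) y).det ≠ 0 := det_fderiv_ne_zero_of_leftInverse (hleft s)
    (hχd s y) ((hχinv s).differentiable (by simp) _)
  have hvd : Differentiable ℝ (v t) :=
    hχ2.differentiable_velocity (hright t) ((hχinv t).differentiable (by simp)) (hv t)
  have hcov (s : ℝ) (g : (Fin n → ℝ) → ℝ) :
      ∫ x in χ s '' V0, g x = ∫ y in V0, |(fderiv ℝ (χ s) y).det| * g (χ s y) :=
    integral_image_eq_integral_abs_det_fderiv_smul volume hV0open.measurableSet
      (fun y _ => (hχd s y).hasFDerivAt.hasFDerivWithinAt) (hleft s).injective.injOn g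
  have hF : ContDiff ℝ 1
      (uncurry fun s y => |(fderiv ℝ (χ s) y).det| * ψ s (χ s y)) :=
    hχ2.abs_det_fderiv (m := 1) hdet |>.mul
      (hψ.comp (contDiff_fst.prodMk (hχ2.of_le (by norm_num))))
  simp_rw [hcov]
  refine (hasDerivAt_setIntegral_of_contDiff hF hV0open.measurableSet hV0bdd t).congr_deriv
    (integral_congr_ae (.of_forall fun y => ?_))
  -- the sum in the statement is `divergence (fun x => ψ t x • v t x) x` unfolded
  exact (hχ2.hasDerivAt_abs_det_fderiv_mul (hv t) (hvd _) (hdet t y)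
    ((hψ.differentiable one_ne_zero) _)).deriv

/-- **Reynolds Transport Theorem in ℝⁿ.** -/
theorem reynolds_transport
    (n : ℕ) (T : ℝ) (hT : 0 < T)
    (χ : ℝ → (Fin n → ℝ) → (Fin n → ℝ))
    (χinv : ℝ → (Fin n → ℝ) → (Fin n → ℝ))
    (hχ : ContDiff ℝ ∞ (fun p : ℝ × (Fin n → ℝ) => χ p.1 p.2))
    (hχ0 : χ 0 = id)
    (hleft : ∀ t, Function.LeftInverse (χinv t) (χ t))
    (hright : ∀ t, Function.RightInverse (χinv t) (χ t))
    (hχinv : ∀ t, ContDiff ℝ ∞ (χinv t))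
    (v : ℝ → (Fin n → ℝ) → (Fin n → ℝ))
    (hv : ∀ t y, HasDerivAt (fun s => χ s y) (v t (χ t y)) t)
    (V0 : Set (Fin n → ℝ)) (hV0open : IsOpen V0) (hV0bdd : Bornology.IsBounded V0)
    (ψ : ℝ → (Fin n → ℝ) → ℝ)
    (hψ : ContDiff ℝ 1 (fun p : ℝ × (Fin n → ℝ) => ψ p.1 p.2)) :
    ∀ t ∈ Set.Icc 0 T,
      HasDerivAt (fun s => ∫ x in χ s '' V0, ψ s x)
        (∫ x in χ t '' V0,
          (deriv (fun s => ψ s x) t +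
            ∑ i, fderiv ℝ (fun y => ψ t y * v t y i) x (Pi.single i 1))) t :=
  reynolds_transport_general n T χ χinv hχ hleft hright hχinv v hv V0 hV0open hV0bdd ψ hψ
end

section
/- Curl representation of the tangential surface divergence: let ν̂ : ℝ³ → ℝ³ be a C¹ vector field with ‖ν̂(x)‖ = 1 on an open neighborhood of Σ and ν̂ = ν on Σ, and let a : ℝ³ → ℝ³ be continuously differentiable. Then at every point of Σ, ∇_Σ·a^∥ = (∇ × (ν̂ × a)) · ν, where a^∥ = a − (a·ν)ν, ∇ × denotes the curl in ℝ³, and ∇_Σ·a^∥ = g^{αβ} (∂(a^∥∘Φ)/∂u^α) · τ_β. -/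
open MeasureTheory ContDiff

noncomputable section

/-- Euclidean dot product on `ℝ³`. -/
def dot3 (a b : Fin 3 → ℝ) : ℝ := ∑ i, a i * b i

/-- Euclidean norm on `ℝ³`. -/
def norm3 (a : Fin 3 → ℝ) : ℝ := Real.sqrt (dot3 a a)

/-- Cross product on `ℝ³`. -/
def cross3 (a b : Fin 3 → ℝ) : Fin 3 → ℝ :=
  ![a 1 * b 2 - a 2 * b 1, a 2 * b 0 - a 0 * b 2, a 0 * b 1 - a 1 * b 0]

/-- Tangent vector `τ_α = ∂Φ/∂u^α` of a parametrized surface. -/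
def tangent (Φ : (Fin 2 → ℝ) → Fin 3 → ℝ) (α : Fin 2) (u : Fin 2 → ℝ) : Fin 3 → ℝ :=
  fderiv ℝ Φ u (Pi.single α 1)

/-- Surface metric tensor `g_{αβ} = τ_α · τ_β`. -/
def metric (Φ : (Fin 2 → ℝ) → Fin 3 → ℝ) (u : Fin 2 → ℝ) : Matrix (Fin 2) (Fin 2) ℝ :=
  Matrix.of fun α β => dot3 (tangent Φ α u) (tangent Φ β u)

/-- Inverse metric tensor `g^{αβ}`. -/
def metricInv (Φ : (Fin 2 → ℝ) → Fin 3 → ℝ) (u : Fin 2 → ℝ) : Matrix (Fin 2) (Fin 2) ℝ :=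
  (metric Φ u)⁻¹

/-- Unit normal `ν = (τ₁ × τ₂)/‖τ₁ × τ₂‖`. -/
def normalVec (Φ : (Fin 2 → ℝ) → Fin 3 → ℝ) (u : Fin 2 → ℝ) : Fin 3 → ℝ :=
  (norm3 (cross3 (tangent Φ 0 u) (tangent Φ 1 u)))⁻¹ •
    cross3 (tangent Φ 0 u) (tangent Φ 1 u)

/-- Second partial derivative `∂²Φ/∂u^α∂u^β`. -/
def secondDeriv (Φ : (Fin 2 → ℝ) → Fin 3 → ℝ) (α β : Fin 2) (u : Fin 2 → ℝ) : Fin 3 → ℝ :=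
  fderiv ℝ (tangent Φ β) u (Pi.single α 1)

/-- Curvature tensor `b_{αβ} = (∂²Φ/∂u^α∂u^β) · ν`. -/
def curvTensor (Φ : (Fin 2 → ℝ) → Fin 3 → ℝ) (α β : Fin 2) (u : Fin 2 → ℝ) : ℝ :=
  dot3 (secondDeriv Φ α β u) (normalVec Φ u)

/-- Mean curvature `κ_M = (1/2) g^{αβ} b_{αβ}`. -/
def meanCurv (Φ : (Fin 2 → ℝ) → Fin 3 → ℝ) (u : Fin 2 → ℝ) : ℝ :=
  (1/2) * ∑ α, ∑ β, metricInv Φ u α β * curvTensor Φ α β u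

/-- Curl of a vector field on `ℝ³`. -/
def curl3 (F : (Fin 3 → ℝ) → Fin 3 → ℝ) (x : Fin 3 → ℝ) : Fin 3 → ℝ :=
  ![fderiv ℝ (fun y => F y 2) x (Pi.single 1 1) - fderiv ℝ (fun y => F y 1) x (Pi.single 2 1),
    fderiv ℝ (fun y => F y 0) x (Pi.single 2 1) - fderiv ℝ (fun y => F y 2) x (Pi.single 0 1),
    fderiv ℝ (fun y => F y 1) x (Pi.single 0 1) - fderiv ℝ (fun y => F y 0) x (Pi.single 1 1)]

/-- Tangential part `a^∥ = a − (a·ν)ν` of an ambient vector field, as a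
function of the surface parameter. -/
def tangPart (Φ : (Fin 2 → ℝ) → Fin 3 → ℝ) (a : (Fin 3 → ℝ) → Fin 3 → ℝ) (u : Fin 2 → ℝ) :
    Fin 3 → ℝ :=
  a (Φ u) - dot3 (a (Φ u)) (normalVec Φ u) • normalVec Φ u

/-- Coordinate surface divergence `∇_Σ·b = g^{αβ} (∂b/∂u^α)·τ_β` of a vector field
defined along the surface. -/
def coordSurfDiv (Φ : (Fin 2 → ℝ) → Fin 3 → ℝ) (b : (Fin 2 → ℝ) → Fin 3 → ℝ)
    (u : Fin 2 → ℝ) : ℝ :=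
  ∑ α, ∑ β, metricInv Φ u α β * dot3 (fderiv ℝ b u (Pi.single α 1)) (tangent Φ β u)

/-!
Both sides reduce to the same expression in the Jacobians `A = Da` and `N = Dν̂` at `x = Φ(u)`,
with `ν = ν̂(x)`. Differentiating `a^∥ = a − (a·ν̂)ν̂` along `τ_α` and pairing with `τ_β ⊥ ν`
leaves `⟨M τ_α, τ_β⟩` for `M = A − (a·ν) N`, and contracting with `g^{αβ}` gives the trace of `M`
on the tangent plane, `tr M − ⟨M ν, ν⟩`. On the other side,
`∇ × (ν̂ × a) = (div a) ν̂ − (div ν̂) a + N a − A ν̂`. Since `‖ν̂‖ = 1` near `x`, `Nᵀ ν = 0`,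
which kills `⟨N a, ν⟩` and `⟨N ν, ν⟩`; both sides become `tr A − ⟨A ν, ν⟩ − (a·ν) tr N`.
-/

open Matrix Filter Topology

lemma dot3_eq_dotProduct (a b : Fin 3 → ℝ) : dot3 a b = a ⬝ᵥ b := rfl

lemma cross3_eq_crossProduct (a b : Fin 3 → ℝ) : cross3 a b = a ⨯₃ b := (cross_apply a b).symm

section Bilinear

variable {𝕜 E F G H : Type*} [NontriviallyNormedField 𝕜] [CompleteSpace 𝕜]
    [NormedAddCommGroup E] [NormedSpace 𝕜 E]
    [NormedAddCommGroup F] [NormedSpace 𝕜 F] [FiniteDimensional 𝕜 F]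
    [NormedAddCommGroup G] [NormedSpace 𝕜 G] [FiniteDimensional 𝕜 G]
    [NormedAddCommGroup H] [NormedSpace 𝕜 H]
    (B : F →ₗ[𝕜] G →ₗ[𝕜] H) {f : E → F} {g : E → G} {x : E}

theorem LinearMap.differentiableAt_of_bilinear
    (hf : DifferentiableAt 𝕜 f x) (hg : DifferentiableAt 𝕜 g x) :
    DifferentiableAt 𝕜 (fun y => B (f y) (g y)) x :=
  (B.toContinuousBilinearMap.hasFDerivAt_of_bilinear hf.hasFDerivAt hg.hasFDerivAt).differentiableAt

theorem LinearMap.fderiv_of_bilinear_apply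
    (hf : DifferentiableAt 𝕜 f x) (hg : DifferentiableAt 𝕜 g x) (v : E) :
    fderiv 𝕜 (fun y => B (f y) (g y)) x v =
      B (fderiv 𝕜 f x v) (g x) + B (f x) (fderiv 𝕜 g x v) := by
  rw [show (fun y => B (f y) (g y)) = fun y => B.toContinuousBilinearMap (f y) (g y) from rfl,
    B.toContinuousBilinearMap.fderiv_of_bilinear hf hg]
  simp only [ContinuousLinearMap.precompR_apply, ContinuousLinearMap.compL_apply,
    _root_.add_apply, ContinuousLinearMap.comp_apply,
    LinearMap.toContinuousBilinearMap_apply, ContinuousLinearMap.precompL_apply, add_comm]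

end Bilinear

def jacobian {m n : Type*} [Fintype n] [DecidableEq n] (F : (n → ℝ) → m → ℝ) (x : n → ℝ) :
    Matrix m n ℝ :=
  LinearMap.toMatrix' (fderiv ℝ F x : (n → ℝ) →ₗ[ℝ] m → ℝ)

section Jacobian

variable {m n : Type*} [Fintype n] [DecidableEq n] (F : (n → ℝ) → m → ℝ) (x : n → ℝ)

lemma jacobian_mulVec (v : n → ℝ) : jacobian F x *ᵥ v = fderiv ℝ F x v :=
  LinearMap.toMatrix'_mulVec _ v

lemma jacobian_apply (i : m) (j : n) : jacobian F x i j = fderiv ℝ F x (Pi.single j 1) i := rfl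

end Jacobian

lemma curl3_eq_of_differentiableAt {F : (Fin 3 → ℝ) → Fin 3 → ℝ} {x : Fin 3 → ℝ}
    (hF : DifferentiableAt ℝ F x) :
    curl3 F x = ![jacobian F x 2 1 - jacobian F x 1 2, jacobian F x 0 2 - jacobian F x 2 0,
      jacobian F x 1 0 - jacobian F x 0 1] := by
  simp [curl3, fderiv_apply hF, jacobian_apply]

lemma jacobian_cross3_apply {F G : (Fin 3 → ℝ) → Fin 3 → ℝ} {x : Fin 3 → ℝ}
    (hF : DifferentiableAt ℝ F x) (hG : DifferentiableAt ℝ G x) (i j : Fin 3) :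
    jacobian (fun y => cross3 (F y) (G y)) x i j =
      (cross3 (fderiv ℝ F x (Pi.single j 1)) (G x)
        + cross3 (F x) (fderiv ℝ G x (Pi.single j 1))) i := by
  simp only [jacobian_apply, cross3_eq_crossProduct]
  rw [LinearMap.fderiv_of_bilinear_apply _ hF hG]

theorem curl3_cross3 {F G : (Fin 3 → ℝ) → Fin 3 → ℝ} {x : Fin 3 → ℝ}
    (hF : DifferentiableAt ℝ F x) (hG : DifferentiableAt ℝ G x) :
    curl3 (fun y => cross3 (F y) (G y)) x =
      (jacobian G x).trace • F x - (jacobian F x).trace • G x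
        + jacobian F x *ᵥ G x - jacobian G x *ᵥ F x := by
  have hFG : DifferentiableAt ℝ (fun y => cross3 (F y) (G y)) x := by
    simp only [cross3_eq_crossProduct]; exact crossProduct.differentiableAt_of_bilinear hF hG
  rw [curl3_eq_of_differentiableAt hFG]
  simp only [jacobian_cross3_apply hF hG]
  ext i
  fin_cases i <;>
  simp only [cross3, Fin.isValue, Fin.zero_eta, Fin.mk_one, Fin.reduceFinMk, cons_val,
    cons_val_zero, cons_val_one, Pi.add_apply, Pi.sub_apply, Pi.smul_apply, smul_eq_mul, trace,
    diag_apply, mulVec, dotProduct, Fin.sum_univ_three, jacobian_apply] <;> ring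

section Gram

variable (t : Fin 2 → Fin 3 → ℝ)

lemma det_gram :
    (Matrix.of fun α β => dot3 (t α) (t β)).det =
      dot3 (cross3 (t 0) (t 1)) (cross3 (t 0) (t 1)) := by
  simp only [det_fin_two, of_apply, dot3_eq_dotProduct, cross3_eq_crossProduct, cross_dot_cross,
    dotProduct_comm (t 1) (t 0)]

lemma sum_adjugate_gram_mul_dot3_mulVec (m : Matrix (Fin 3) (Fin 3) ℝ) :
    ∑ α, ∑ β, (Matrix.of fun α β => dot3 (t α) (t β)).adjugate α β * dot3 (m *ᵥ t α) (t β) =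
      dot3 (cross3 (t 0) (t 1)) (cross3 (t 0) (t 1)) * m.trace
        - dot3 (m *ᵥ cross3 (t 0) (t 1)) (cross3 (t 0) (t 1)) := by
  simp only [adjugate_fin_two, of_apply, dot3, cross3, Fin.isValue, cons_val', cons_val_fin_one,
    cons_val, cons_val_zero, cons_val_one, trace, diag_apply, mulVec, dotProduct, Fin.sum_univ_two,
    Fin.sum_univ_three]
  ring

end Gram

lemma sum_metricInv_mul_dot3_mulVec {Φ : (Fin 2 → ℝ) → Fin 3 → ℝ} {u : Fin 2 → ℝ}
    (hindep : LinearIndependent ℝ ![tangent Φ 0 u, tangent Φ 1 u]) (m : Matrix (Fin 3) (Fin 3) ℝ) :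
    ∑ α, ∑ β, metricInv Φ u α β * dot3 (m *ᵥ tangent Φ α u) (tangent Φ β u) =
      m.trace - dot3 (m *ᵥ normalVec Φ u) (normalVec Φ u) := by
  set c := cross3 (tangent Φ 0 u) (tangent Φ 1 u) with hc_def
  have hc : dot3 c c ≠ 0 := by
    rw [dot3_eq_dotProduct, Ne, dotProduct_self_eq_zero, hc_def, cross3_eq_crossProduct]
    exact crossProduct_ne_zero_iff_linearIndependent.2 hindep
  have hnorm : norm3 c ^ 2 = dot3 c c :=
    Real.sq_sqrt (Finset.sum_nonneg fun i _ => mul_self_nonneg (c i))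
  have hν : dot3 (m *ᵥ normalVec Φ u) (normalVec Φ u) = (dot3 c c)⁻¹ * dot3 (m *ᵥ c) c := by
    rw [show normalVec Φ u = (norm3 c)⁻¹ • c from rfl, ← hnorm]
    simp only [mulVec_smul, dot3_eq_dotProduct, smul_dotProduct, dotProduct_smul, smul_eq_mul]
    ring
  have hinv : metricInv Φ u = (dot3 c c)⁻¹ • (metric Φ u).adjugate := by
    rw [metricInv, inv_def, Ring.inverse_eq_inv, metric, det_gram]
  calc ∑ α, ∑ β, metricInv Φ u α β * dot3 (m *ᵥ tangent Φ α u) (tangent Φ β u)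
      = (dot3 c c)⁻¹ *
          ∑ α, ∑ β, (metric Φ u).adjugate α β * dot3 (m *ᵥ tangent Φ α u) (tangent Φ β u) := by
        simp only [hinv, Matrix.smul_apply, smul_eq_mul, mul_assoc, Finset.mul_sum]
    _ = (dot3 c c)⁻¹ * (dot3 c c * m.trace - dot3 (m *ᵥ c) c) := by
        rw [← sum_adjugate_gram_mul_dot3_mulVec (fun α => tangent Φ α u)]
        rfl
    _ = m.trace - dot3 (m *ᵥ normalVec Φ u) (normalVec Φ u) := by
        rw [hν]
        field_simp

lemma dot3_fderiv_self_eq_zero {E : Type*} [NormedAddCommGroup E] [NormedSpace ℝ E]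
    {f : E → Fin 3 → ℝ} {x : E} {c : ℝ} (hf : DifferentiableAt ℝ f x)
    (hc : ∀ᶠ y in 𝓝 x, dot3 (f y) (f y) = c) (v : E) :
    dot3 (fderiv ℝ f x v) (f x) = 0 := by
  have hderiv := (dotProductBilin ℝ ℝ).fderiv_of_bilinear_apply hf hf v
  have hconst : (fun y => dotProductBilin ℝ ℝ (f y) (f y)) =ᶠ[𝓝 x] fun _ => c := hc
  rw [hconst.fderiv_eq, fderiv_const_apply] at hderiv
  simp only [dotProductBilin_apply_apply, dotProduct_comm (f x)] at hderiv
  rw [dot3_eq_dotProduct]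
  simpa using hderiv.symm

lemma fderiv_tangPart_apply {Φ : (Fin 2 → ℝ) → Fin 3 → ℝ} {a νhat : (Fin 3 → ℝ) → Fin 3 → ℝ}
    {u : Fin 2 → ℝ} (hΦ : DifferentiableAt ℝ Φ u) (ha : DifferentiableAt ℝ a (Φ u))
    (hνhat : DifferentiableAt ℝ νhat (Φ u)) (hext : ∀ᶠ v in 𝓝 u, νhat (Φ v) = normalVec Φ v)
    (w : Fin 2 → ℝ) :
    fderiv ℝ (tangPart Φ a) u w =
      fderiv ℝ a (Φ u) (fderiv ℝ Φ u w)
        - (dot3 (fderiv ℝ a (Φ u) (fderiv ℝ Φ u w)) (νhat (Φ u))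
            + dot3 (a (Φ u)) (fderiv ℝ νhat (Φ u) (fderiv ℝ Φ u w))) • νhat (Φ u)
        - dot3 (a (Φ u)) (νhat (Φ u)) • fderiv ℝ νhat (Φ u) (fderiv ℝ Φ u w) := by
  have hb : DifferentiableAt ℝ (fun v => a (Φ v)) u := ha.comp u hΦ
  have hn : DifferentiableAt ℝ (fun v => νhat (Φ v)) u := hνhat.comp u hΦ
  have hdot : DifferentiableAt ℝ (fun v => dot3 (a (Φ v)) (νhat (Φ v))) u :=
    (dotProductBilin ℝ ℝ).differentiableAt_of_bilinear hb hn
  have hloc : tangPart Φ a =ᶠ[𝓝 u]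
      fun v => a (Φ v) - dot3 (a (Φ v)) (νhat (Φ v)) • νhat (Φ v) := by
    filter_upwards [hext] with v hv
    rw [tangPart, hv]
  have hdot' : fderiv ℝ (fun v => dot3 (a (Φ v)) (νhat (Φ v))) u w =
      dot3 (fderiv ℝ a (Φ u) (fderiv ℝ Φ u w)) (νhat (Φ u))
        + dot3 (a (Φ u)) (fderiv ℝ νhat (Φ u) (fderiv ℝ Φ u w)) := by
    have h := (dotProductBilin ℝ ℝ).fderiv_of_bilinear_apply hb hn w
    rw [fderiv_fun_comp u ha hΦ, fderiv_fun_comp u hνhat hΦ] at h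
    exact h
  rw [hloc.fderiv_eq, fderiv_fun_sub hb (hdot.fun_smul hn), fderiv_fun_smul hdot hn]
  simp only [_root_.sub_apply, _root_.add_apply, _root_.smul_apply,
    ContinuousLinearMap.smulRight_apply, hdot', fderiv_fun_comp u ha hΦ, fderiv_fun_comp u hνhat hΦ,
    ContinuousLinearMap.comp_apply]
  abel

lemma dot3_tangent_normalVec (Φ : (Fin 2 → ℝ) → Fin 3 → ℝ) (u : Fin 2 → ℝ) (β : Fin 2) :
    dot3 (tangent Φ β u) (normalVec Φ u) = 0 := by
  fin_cases β <;>
  simp [normalVec, dot3_eq_dotProduct, cross3_eq_crossProduct, dot_self_cross, dot_cross_self]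

lemma coordSurfDiv_tangPart {Φ : (Fin 2 → ℝ) → Fin 3 → ℝ} {a νhat : (Fin 3 → ℝ) → Fin 3 → ℝ}
    {u : Fin 2 → ℝ} (hΦ : DifferentiableAt ℝ Φ u) (ha : DifferentiableAt ℝ a (Φ u))
    (hνhat : DifferentiableAt ℝ νhat (Φ u)) (hext : ∀ᶠ v in 𝓝 u, νhat (Φ v) = normalVec Φ v)
    (hindep : LinearIndependent ℝ ![tangent Φ 0 u, tangent Φ 1 u]) :
    coordSurfDiv Φ (tangPart Φ a) u =
      (jacobian a (Φ u) - dot3 (a (Φ u)) (normalVec Φ u) • jacobian νhat (Φ u)).trace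
        - dot3 ((jacobian a (Φ u) - dot3 (a (Φ u)) (normalVec Φ u) • jacobian νhat (Φ u)) *ᵥ
            normalVec Φ u) (normalVec Φ u) := by
  rw [← sum_metricInv_mul_dot3_mulVec hindep]
  refine Finset.sum_congr rfl fun α _ => Finset.sum_congr rfl fun β _ => ?_
  have hτν : normalVec Φ u ⬝ᵥ tangent Φ β u = 0 := by
    rw [dotProduct_comm]; exact dot3_tangent_normalVec Φ u β
  rw [fderiv_tangPart_apply hΦ ha hνhat hext, hext.self_of_nhds,
    show fderiv ℝ Φ u (Pi.single α 1) = tangent Φ α u from rfl]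
  simp only [dot3_eq_dotProduct, sub_mulVec, smul_mulVec, jacobian_mulVec, sub_dotProduct,
    smul_dotProduct, hτν, smul_eq_mul, mul_zero, sub_zero]

theorem tangential_surface_divergence_curl_general
    (U : Set (Fin 2 → ℝ)) (hU : IsOpen U)
    (Φ : (Fin 2 → ℝ) → Fin 3 → ℝ)
    (hΦ : ContDiffOn ℝ ∞ Φ U)
    (hindep : ∀ u ∈ U, LinearIndependent ℝ ![tangent Φ 0 u, tangent Φ 1 u])
    (O : Set (Fin 3 → ℝ)) (hO : IsOpen O) (hSigmaO : Φ '' U ⊆ O)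
    (νhat : (Fin 3 → ℝ) → Fin 3 → ℝ)
    (hνhat : ContDiffOn ℝ 1 νhat O)
    (hunit : ∀ x ∈ O, norm3 (νhat x) = 1)
    (hext : ∀ u ∈ U, νhat (Φ u) = normalVec Φ u)
    (a : (Fin 3 → ℝ) → Fin 3 → ℝ) (ha : ContDiff ℝ 1 a) :
    ∀ u ∈ U,
      coordSurfDiv Φ (tangPart Φ a) u =
        dot3 (curl3 (fun x => cross3 (νhat x) (a x)) (Φ u)) (normalVec Φ u) := by
  intro u hu
  have hx : Φ u ∈ O := hSigmaO ⟨u, hu, rfl⟩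
  have hΦu : DifferentiableAt ℝ Φ u :=
    (hΦ.differentiableOn (by simp)).differentiableAt (hU.mem_nhds hu)
  have hνx : DifferentiableAt ℝ νhat (Φ u) :=
    (hνhat.differentiableOn one_ne_zero).differentiableAt (hO.mem_nhds hx)
  have hax : DifferentiableAt ℝ a (Φ u) := ha.differentiable one_ne_zero _
  have hunit' : ∀ᶠ y in 𝓝 (Φ u), dot3 (νhat y) (νhat y) = 1 :=
    eventually_of_mem (hO.mem_nhds hx) fun y hy => Real.sqrt_eq_one.mp (hunit y hy)
  have hνν : νhat (Φ u) ⬝ᵥ νhat (Φ u) = 1 := hunit'.self_of_nhds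
  have hNν (v : Fin 3 → ℝ) : jacobian νhat (Φ u) *ᵥ v ⬝ᵥ νhat (Φ u) = 0 := by
    rw [jacobian_mulVec]; exact dot3_fderiv_self_eq_zero hνx hunit' v
  rw [coordSurfDiv_tangPart hΦu hax hνx (eventually_of_mem (hU.mem_nhds hu) hext) (hindep u hu),
    curl3_cross3 hνx hax, ← hext u hu]
  simp only [dot3_eq_dotProduct, trace_sub, trace_smul, sub_mulVec, smul_mulVec, sub_dotProduct,
    add_dotProduct, smul_dotProduct, smul_eq_mul, hνν, hNν]
  ring

/-- **Curl representation of the tangential surface divergence:**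
`∇_Σ·a^∥ = (∇ × (ν̂ × a)) · ν` on `Σ`, for any `C¹` unit extension `ν̂` of the normal. -/
theorem tangential_surface_divergence_curl
    (U : Set (Fin 2 → ℝ)) (hU : IsOpen U)
    (Φ : (Fin 2 → ℝ) → Fin 3 → ℝ)
    (hΦ : ContDiffOn ℝ ∞ Φ U)
    (hΦinj : Set.InjOn Φ U)
    (hindep : ∀ u ∈ U, LinearIndependent ℝ ![tangent Φ 0 u, tangent Φ 1 u])
    (O : Set (Fin 3 → ℝ)) (hO : IsOpen O) (hSigmaO : Φ '' U ⊆ O)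
    (νhat : (Fin 3 → ℝ) → Fin 3 → ℝ)
    (hνhat : ContDiffOn ℝ 1 νhat O)
    (hunit : ∀ x ∈ O, norm3 (νhat x) = 1)
    (hext : ∀ u ∈ U, νhat (Φ u) = normalVec Φ u)
    (a : (Fin 3 → ℝ) → Fin 3 → ℝ) (ha : ContDiff ℝ 1 a) :
    ∀ u ∈ U,
      coordSurfDiv Φ (tangPart Φ a) u =
        dot3 (curl3 (fun x => cross3 (νhat x) (a x)) (Φ u)) (normalVec Φ u) :=
  tangential_surface_divergence_curl_general U hU Φ hΦ hindep O hO hSigmaO νhat hνhat hunit hext a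
    ha
end
end

section
/- Leibniz rule for an integral with a moving internal discontinuity: let σ : [0,T] → ℝ be continuously differentiable with α < σ(t) < β for all t, and let h₁, h₂ : [0,T] × ℝ → ℝ be continuously differentiable. Define h(t,y) = h₁(t,y) for y < σ(t) and h(t,y) = h₂(t,y) for y > σ(t). Then t ↦ ∫_α^β h(t,y) dy is differentiable and d/dt ∫_α^β h(t,y) dy = ∫_α^{σ(t)} ∂h₁/∂t (t,y) dy + ∫_{σ(t)}^β ∂h₂/∂t (t,y) dy + [ h₁(t,σ(t)) − h₂(t,σ(t)) ] σ'(t). -/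
/-!
For `s` near `t` we have `α < σ s < β`, so the integral splits at `σ s` into
`∫ y in α..σ s, h₁ s y + ∫ y in σ s..β, h₂ s y`, and it suffices to differentiate
`s ↦ ∫ y in a..σ s, g s y` for a `C¹` function `g`. Write it as
`∫ y in a..σ t, g s y + ∫ y in σ t..σ s, g t y + ∫ y in σ t..σ s, (g s y - g t y)`.
The first term is differentiated under the integral sign, the second by the fundamental theorem
of calculus and the chain rule, and the third is `o(s - t)`: `g` is locally Lipschitz, so its
integrand is `O(|s - t|)` on an interval of length `|σ s - σ t| → 0`.
-/

open MeasureTheory intervalIntegral Set Metric Filter Topology Asymptotics Function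

variable {E : Type*} [NormedAddCommGroup E] [NormedSpace ℝ E] {g : ℝ → ℝ → E}

theorem ContDiff.hasDerivAt_uncurry_left (hg : ContDiff ℝ 1 (uncurry g)) (s y : ℝ) :
    HasDerivAt (fun u => g u y) (fderiv ℝ (uncurry g) (s, y) (1, 0)) s :=
  (hg.differentiable one_ne_zero (s, y)).hasFDerivAt.comp_hasDerivAt (l := uncurry g) s
    ((hasDerivAt_id' s).prodMk (hasDerivAt_const s y))

theorem ContDiff.continuous_deriv_uncurry_left (hg : ContDiff ℝ 1 (uncurry g)) :
    Continuous fun p : ℝ × ℝ => deriv (fun u => g u p.2) p.1 := by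
  simp_rw [fun p : ℝ × ℝ => (hg.hasDerivAt_uncurry_left p.1 p.2).deriv]
  exact (hg.continuous_fderiv one_ne_zero).clm_apply continuous_const

theorem ContDiff.hasDerivAt_deriv_uncurry_left (hg : ContDiff ℝ 1 (uncurry g)) (s y : ℝ) :
    HasDerivAt (fun u => g u y) (deriv (fun u => g u y) s) s :=
  (hg.hasDerivAt_uncurry_left s y).differentiableAt.hasDerivAt

theorem hasDerivAt_integral_of_contDiff_uncurry (hg : ContDiff ℝ 1 (uncurry g)) (a b t : ℝ) :
    HasDerivAt (fun s => ∫ y in a..b, g s y) (∫ y in a..b, deriv (fun s => g s y) t) t := by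
  obtain ⟨M, hM⟩ := ((isCompact_closedBall t 1).prod (isCompact_uIcc (a := a) (b := b))
    ).exists_bound_of_continuousOn hg.continuous_deriv_uncurry_left.continuousOn
  exact (hasDerivAt_integral_of_dominated_loc_of_deriv_le (bound := fun _ => M)
    (ball_mem_nhds t one_pos)
    (.of_forall fun s => (hg.continuous.uncurry_left s).aestronglyMeasurable)
    ((hg.continuous.uncurry_left t).intervalIntegrable a b)
    (hg.continuous_deriv_uncurry_left.comp (Continuous.prodMk_right t)).aestronglyMeasurable
    (.of_forall fun y hy s hs => hM (s, y) ⟨ball_subset_closedBall hs, uIoc_subset_uIcc hy⟩)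
    intervalIntegrable_const
    (.of_forall fun y _ s _ => hg.hasDerivAt_deriv_uncurry_left s y)).2

theorem isLittleO_integral_sub_of_contDiff_uncurry (hg : ContDiff ℝ 1 (uncurry g))
    {σ : ℝ → ℝ} {t : ℝ} (hσ : ContinuousAt σ t) :
    (fun s => ∫ y in σ t..σ s, (g s y - g t y)) =o[𝓝 t] fun s => s - t := by
  obtain ⟨K, U, hU, hK⟩ := (hg.contDiffAt (x := (t, σ t))).exists_lipschitzOnWith
  obtain ⟨r, hr, hrU⟩ := Metric.mem_nhds_iff.1 hU
  rw [← ball_prod_same] at hrU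
  have hbound : ∀ᶠ s in 𝓝 t,
      ‖∫ y in σ t..σ s, (g s y - g t y)‖ ≤ K * ‖(s - t) * (σ s - σ t)‖ := by
    filter_upwards [ball_mem_nhds t hr, hσ (ball_mem_nhds (σ t) hr)] with s hs hσs
    rw [norm_mul, ← mul_assoc]
    refine norm_integral_le_of_norm_le_const fun y hy => ?_
    have hy : y ∈ ball (σ t) r :=
      (convex_ball (σ t) r).ordConnected.uIcc_subset (mem_ball_self hr) hσs (uIoc_subset_uIcc hy)
    simpa using
      hK.norm_sub_le (hrU (mk_mem_prod hs hy)) (hrU (mk_mem_prod (mem_ball_self hr) hy))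
  have hσ_sub : (fun s => σ s - σ t) =o[𝓝 t] fun _ => (1 : ℝ) :=
    (isLittleO_one_iff ℝ).2 (by simpa using hσ.sub_const (σ t))
  exact (IsBigO.of_bound K hbound).trans_isLittleO
    (by simpa using (isBigO_refl (fun s => s - t) (𝓝 t)).mul_isLittleO hσ_sub)

theorem integral_ite_lt_eq_add {f₁ f₂ : ℝ → E} {a b x : ℝ} (hax : a ≤ x) (hxb : x ≤ b)
    (hf₁ : IntervalIntegrable f₁ volume a x) (hf₂ : IntervalIntegrable f₂ volume x b) :
    ∫ y in a..b, (if y < x then f₁ y else f₂ y) = (∫ y in a..x, f₁ y) + ∫ y in x..b, f₂ y := by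
  have h₁ : EqOn f₁ (fun y => if y < x then f₁ y else f₂ y) (uIoo a x) := fun y hy => by
    rw [uIoo_of_le hax] at hy
    exact (if_pos hy.2).symm
  have h₂ : EqOn f₂ (fun y => if y < x then f₁ y else f₂ y) (uIoo x b) := fun y hy => by
    rw [uIoo_of_le hxb] at hy
    exact (if_neg hy.1.not_gt).symm
  rw [← integral_add_adjacent_intervals (hf₁.congr_uIoo h₁) (hf₂.congr_uIoo h₂),
    ← integral_congr_uIoo h₁, ← integral_congr_uIoo h₂]

section Moving

variable [CompleteSpace E] {σ : ℝ → ℝ} {σ' t : ℝ}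

theorem hasDerivAt_integral_from_of_contDiff_uncurry (hg : ContDiff ℝ 1 (uncurry g))
    (hσ : HasDerivAt σ σ' t) :
    HasDerivAt (fun s => ∫ y in σ t..σ s, g s y) (σ' • g t (σ t)) t := by
  have hfrozen : HasDerivAt (fun s => ∫ y in σ t..σ s, g t y) (σ' • g t (σ t)) t :=
    ((hg.continuous.uncurry_left t).integral_hasStrictDerivAt _ _).hasDerivAt.scomp t hσ
  have hrest : HasDerivAt (fun s => ∫ y in σ t..σ s, (g s y - g t y)) 0 t := by
    simpa [hasDerivAt_iff_isLittleO] using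
      isLittleO_integral_sub_of_contDiff_uncurry hg hσ.continuousAt
  refine ((hfrozen.add hrest).congr_of_eventuallyEq (.of_forall fun s => ?_)).congr_deriv
    (add_zero _)
  have hint : ∀ u, IntervalIntegrable (g u) volume (σ t) (σ s) := fun u =>
    (hg.continuous.uncurry_left u).intervalIntegrable _ _
  rw [Pi.add_apply, ← integral_add (hint t) ((hint s).sub (hint t))]
  simp only [add_sub_cancel]

theorem hasDerivAt_integral_upper_of_contDiff_uncurry (hg : ContDiff ℝ 1 (uncurry g))
    (hσ : HasDerivAt σ σ' t) (a : ℝ) :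
    HasDerivAt (fun s => ∫ y in a..σ s, g s y)
      ((∫ y in a..σ t, deriv (fun s => g s y) t) + σ' • g t (σ t)) t := by
  refine ((hasDerivAt_integral_of_contDiff_uncurry hg a (σ t) t).add
    (hasDerivAt_integral_from_of_contDiff_uncurry hg hσ)).congr_of_eventuallyEq
    (.of_forall fun s => ?_)
  have hint : ∀ b c, IntervalIntegrable (g s) volume b c := fun b c =>
    (hg.continuous.uncurry_left s).intervalIntegrable b c
  exact (integral_add_adjacent_intervals (hint _ _) (hint _ _)).symm

theorem hasDerivAt_integral_lower_of_contDiff_uncurry (hg : ContDiff ℝ 1 (uncurry g))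
    (hσ : HasDerivAt σ σ' t) (b : ℝ) :
    HasDerivAt (fun s => ∫ y in σ s..b, g s y)
      ((∫ y in σ t..b, deriv (fun s => g s y) t) - σ' • g t (σ t)) t := by
  convert (hasDerivAt_integral_upper_of_contDiff_uncurry hg hσ b).neg using 1
  · exact funext fun s => integral_symm _ _
  · rw [neg_add', ← integral_symm]

end Moving

theorem leibniz_rule_moving_discontinuity_general
    (T : ℝ) (α β : ℝ)
    (σ : ℝ → ℝ) (hσ : ContDiff ℝ 1 σ)
    (hσrange : ∀ t ∈ Set.Icc 0 T, α < σ t ∧ σ t < β)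
    (h₁ h₂ : ℝ → ℝ → ℝ)
    (hh₁ : ContDiff ℝ 1 (fun p : ℝ × ℝ => h₁ p.1 p.2))
    (hh₂ : ContDiff ℝ 1 (fun p : ℝ × ℝ => h₂ p.1 p.2)) :
    ∀ t ∈ Set.Icc 0 T,
      HasDerivAt
        (fun s => ∫ y in α..β, if y < σ s then h₁ s y else h₂ s y)
        ((∫ y in α..(σ t), deriv (fun s => h₁ s y) t) +
          (∫ y in (σ t)..β, deriv (fun s => h₂ s y) t) +
          (h₁ t (σ t) - h₂ t (σ t)) * deriv σ t) t := by
  intro t ht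
  have hσt : HasDerivAt σ (deriv σ t) t := (hσ.differentiable one_ne_zero t).hasDerivAt
  have hsplit : (fun s => ∫ y in α..β, if y < σ s then h₁ s y else h₂ s y) =ᶠ[𝓝 t]
      fun s => (∫ y in α..σ s, h₁ s y) + ∫ y in σ s..β, h₂ s y := by
    filter_upwards [hσ.continuous.continuousAt (Ioo_mem_nhds (hσrange t ht).1 (hσrange t ht).2)]
      with s hs
    exact integral_ite_lt_eq_add hs.1.le hs.2.le
      ((hh₁.continuous.uncurry_left s).intervalIntegrable _ _)
      ((hh₂.continuous.uncurry_left s).intervalIntegrable _ _)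
  refine (((hasDerivAt_integral_upper_of_contDiff_uncurry hh₁ hσt α).add
    (hasDerivAt_integral_lower_of_contDiff_uncurry hh₂ hσt β)).congr_of_eventuallyEq
    hsplit).congr_deriv ?_
  simp only [smul_eq_mul]
  ring

/-- **Leibniz rule for an integral with a moving internal discontinuity:**
for `h(t,y) = h₁(t,y)` below `y = σ(t)` and `h₂(t,y)` above,
`d/dt ∫_α^β h dy = ∫_α^{σ(t)} ∂_t h₁ dy + ∫_{σ(t)}^β ∂_t h₂ dy
  + [h₁(t,σ(t)) − h₂(t,σ(t))] σ'(t)`. -/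
theorem leibniz_rule_moving_discontinuity
    (T : ℝ) (hT : 0 < T) (α β : ℝ)
    (σ : ℝ → ℝ) (hσ : ContDiff ℝ 1 σ)
    (hσrange : ∀ t ∈ Set.Icc 0 T, α < σ t ∧ σ t < β)
    (h₁ h₂ : ℝ → ℝ → ℝ)
    (hh₁ : ContDiff ℝ 1 (fun p : ℝ × ℝ => h₁ p.1 p.2))
    (hh₂ : ContDiff ℝ 1 (fun p : ℝ × ℝ => h₂ p.1 p.2)) :
    ∀ t ∈ Set.Icc 0 T,
      HasDerivAt
        (fun s => ∫ y in α..β, if y < σ s then h₁ s y else h₂ s y)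
        ((∫ y in α..(σ t), deriv (fun s => h₁ s y) t) +
          (∫ y in (σ t)..β, deriv (fun s => h₂ s y) t) +
          (h₁ t (σ t) - h₂ t (σ t)) * deriv σ t) t :=
  leibniz_rule_moving_discontinuity_general T α β σ hσ hσrange h₁ h₂ hh₁ hh₂
end

section
/- Generalized Rankine–Hugoniot jump condition in one space dimension: let p : [0,T] → ℝ be continuously differentiable, and let ψ₁, ψ₂, v₁, v₂, j₁, j₂ : [0,T] × ℝ → ℝ be continuously differentiable; define ψ, v, j by (ψ,v,j) = (ψ₁,v₁,j₁) for x < p(t) and = (ψ₂,v₂,j₂) for x > p(t), and write ⟦f⟧(t) = f₂(t,p(t)) − f₁(t,p(t)). Let ξ : [0,T] × ℝ → ℝ be continuous and ψ_p, ξ_p : [0,T] → ℝ with ψ_p continuously differentiable. Assume the integral balance law: for all a < b and all t with a < p(t) < b, d/dt [ ∫_a^b ψ(t,x) dx + ψ_p(t) ] = (ψ v + j)(t,a) − (ψ v + j)(t,b) + ∫_a^b ξ(t,x) dx + ξ_p(t). Then for every t ∈ (0,T): ψ_p'(t) − ξ_p(t) = p'(t) ⟦ψ⟧(t) − ⟦ψ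 v + j⟧(t). -/
open MeasureTheory intervalIntegral

noncomputable section

/-!
Fix `t` and `a < p t < b`. For `s` near `t` the mass `∫ₐᵇ ψ(s, ·)` splits at `p s` into
`∫ₐ^{p s} ψ₁(s, ·) + ∫_{p s}^b ψ₂(s, ·)`, so the Leibniz rule with a moving endpoint gives its
time derivative `∫ₐ^{p t} ∂ₜψ₁ + ∫_{p t}^b ∂ₜψ₂ + p'(t) (ψ₁ − ψ₂)(t, p t)`. Subtracting this from
the balance law computes `ψ_p'(t)`, and the identity obtained holds for `a = p t − h`,
`b = p t + h`, `h > 0`, with both sides continuous in `h`; at `h = 0` the integrals vanish and the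
fluxes become the one-sided traces.
-/

section Leibniz

open Set Filter Topology Function

variable {E : Type*} [NormedAddCommGroup E] [NormedSpace ℝ E]

theorem ContDiff.exists_continuous_hasDerivAt_fst {f : ℝ → ℝ → E}
    (hf : ContDiff ℝ 1 (uncurry f)) :
    ∃ f' : ℝ → ℝ → E, Continuous (uncurry f') ∧ ∀ s x, HasDerivAt (f · x) (f' s x) s :=
  ⟨fun s x => fderiv ℝ (uncurry f) (s, x) (1, 0),
    (hf.continuous_fderiv one_ne_zero).clm_apply continuous_const, fun s x =>
    (hf.differentiable one_ne_zero (s, x)).hasFDerivAt.comp_hasDerivAt (x := s)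
      (f := fun u => (u, x)) ((hasDerivAt_id s).prodMk (hasDerivAt_const s x))⟩

@[fun_prop]
theorem continuous_intervalIntegral_of_continuous {X : Type*} [TopologicalSpace X] {g : ℝ → E}
    (hg : Continuous g) {u w : X → ℝ} (hu : Continuous u) (hw : Continuous w) :
    Continuous fun y => ∫ x in u y..w y, g x := by
  have hprim := continuous_primitive (μ := volume) (fun _ _ => hg.intervalIntegrable _ _) 0
  refine ((hprim.comp hw).sub (hprim.comp hu)).congr fun y => ?_
  exact integral_interval_sub_left (hg.intervalIntegrable _ _) (hg.intervalIntegrable _ _)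

theorem intervalIntegral_ite_lt {μ : Measure ℝ} [NullSingletonClass μ] {f g : ℝ → E}
    {a b c : ℝ} (hac : a ≤ c) (hcb : c ≤ b) (hf : IntervalIntegrable f μ a c)
    (hg : IntervalIntegrable g μ c b) :
    ∫ x in a..b, (if x < c then f x else g x) ∂μ = (∫ x in a..c, f x ∂μ) + ∫ x in c..b, g x ∂μ := by
  have hleft : EqOn f (fun x => if x < c then f x else g x) (uIoo a c) := fun x hx => by
    rw [uIoo_of_le hac] at hx
    simp [hx.2]
  have hright : EqOn g (fun x => if x < c then f x else g x) (uIoo c b) := fun x hx => by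
    rw [uIoo_of_le hcb] at hx
    simp [hx.1.not_gt]
  rw [← integral_add_adjacent_intervals (hf.congr_uIoo hleft) (hg.congr_uIoo hright),
    integral_congr_uIoo hleft, integral_congr_uIoo hright]

theorem hasDerivAt_intervalIntegral_param {f f' : ℝ → ℝ → E} (hf : ∀ s, Continuous (f s))
    (hf' : Continuous (uncurry f')) (hderiv : ∀ s x, HasDerivAt (f · x) (f' s x) s)
    (a b t : ℝ) :
    HasDerivAt (fun s => ∫ x in a..b, f s x) (∫ x in a..b, f' t x) t := by
  obtain ⟨C, hC⟩ := (isCompact_Icc.prod isCompact_uIcc).exists_bound_of_continuousOn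
    (s := Icc (t - 1) (t + 1) ×ˢ uIcc a b) hf'.continuousOn
  refine (hasDerivAt_integral_of_dominated_loc_of_deriv_le (bound := fun _ => C)
    (Icc_mem_nhds (sub_one_lt t) (lt_add_one t))
    (Eventually.of_forall fun s => (hf s).aestronglyMeasurable) ((hf t).intervalIntegrable a b)
    (hf'.uncurry_left t).aestronglyMeasurable ?_ intervalIntegrable_const
    (Eventually.of_forall fun x _ s _ => hderiv s x)).2
  exact Eventually.of_forall fun x hx s hs => hC (s, x) ⟨hs, uIoc_subset_uIcc hx⟩

variable [CompleteSpace E]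

theorem hasDerivAt_intervalIntegral_param_from_base {f : ℝ → ℝ → E}
    (hf : Continuous (uncurry f)) {q : ℝ → ℝ} {q' t : ℝ} (hq : HasDerivAt q q' t) :
    HasDerivAt (fun s => ∫ x in q t..q s, f s x) (q' • f t (q t)) t := by
  set c := q t with hc
  -- freezing the integrand at `(t, c)` costs `o(q s - c)` by continuity, hence `o(s - t)`
  have hsplit : ∀ s, ∫ x in c..q s, f s x =
      (∫ x in c..q s, (f s x - f t c)) + (q s - c) • f t c := by
    intro s
    rw [integral_sub ((hf.uncurry_left s).intervalIntegrable _ _)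
      intervalIntegrable_const, intervalIntegral.integral_const, sub_add_cancel]
  have hsmall : (fun s => ∫ x in c..q s, (f s x - f t c)) =o[𝓝 t] fun s => q s - c := by
    refine Asymptotics.isLittleO_iff.2 fun ε hε => ?_
    obtain ⟨δ, hδ, hfδ⟩ := Metric.continuousAt_iff.1 (hf.continuousAt (x := (t, c))) ε hε
    have hqδ : ∀ᶠ s in 𝓝 t, dist (q s) c < δ :=
      hq.continuousAt.eventually (Metric.ball_mem_nhds c hδ)
    filter_upwards [hqδ, Metric.ball_mem_nhds t hδ] with s hqs hs
    refine (intervalIntegral.norm_integral_le_of_norm_le_const fun x hx => ?_).trans_eq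
      (by rw [Real.norm_eq_abs])
    rw [← dist_eq_norm]
    refine (hfδ (x := (s, x)) ?_).le
    rw [Prod.dist_eq]
    exact max_lt hs ((abs_sub_left_of_mem_uIcc (uIoc_subset_uIcc hx)).trans_lt hqs)
  have hrem : HasDerivAt (fun s => ∫ x in c..q s, (f s x - f t c)) 0 t := by
    refine hasDerivAt_iff_isLittleO.2 ?_
    simpa [← hc] using hsmall.trans_isBigO hq.isBigO_sub
  have := hrem.add ((hq.sub_const c).smul_const (f t c))
  rw [zero_add] at this
  exact this.congr_of_eventuallyEq (Eventually.of_forall hsplit)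

theorem hasDerivAt_intervalIntegral_param_upper {f f' : ℝ → ℝ → E}
    (hf : Continuous (uncurry f)) (hf' : Continuous (uncurry f'))
    (hderiv : ∀ s x, HasDerivAt (f · x) (f' s x) s) (a : ℝ) {q : ℝ → ℝ} {q' t : ℝ}
    (hq : HasDerivAt q q' t) :
    HasDerivAt (fun s => ∫ x in a..q s, f s x) ((∫ x in a..q t, f' t x) + q' • f t (q t)) t :=
  ((hasDerivAt_intervalIntegral_param (hf.uncurry_left ·) hf' hderiv a (q t) t).add
    (hasDerivAt_intervalIntegral_param_from_base hf hq)).congr_of_eventuallyEq <|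
    Eventually.of_forall fun s => (integral_add_adjacent_intervals
      ((hf.uncurry_left s).intervalIntegrable _ _)
      ((hf.uncurry_left s).intervalIntegrable _ _)).symm

theorem hasDerivAt_intervalIntegral_ite_lt {f₁ f₂ f₁' f₂' : ℝ → ℝ → E}
    (hf₁ : Continuous (uncurry f₁)) (hf₂ : Continuous (uncurry f₂))
    (hf₁' : Continuous (uncurry f₁')) (hf₂' : Continuous (uncurry f₂'))
    (hd₁ : ∀ s x, HasDerivAt (f₁ · x) (f₁' s x) s) (hd₂ : ∀ s x, HasDerivAt (f₂ · x) (f₂' s x) s)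
    {q : ℝ → ℝ} {q' t a b : ℝ} (hq : HasDerivAt q q' t) (ha : a < q t) (hb : q t < b) :
    HasDerivAt (fun s => ∫ x in a..b, if x < q s then f₁ s x else f₂ s x)
      ((∫ x in a..q t, f₁' t x) + (∫ x in q t..b, f₂' t x) + q' • (f₁ t (q t) - f₂ t (q t))) t := by
  have hsplit : (fun s => ∫ x in a..b, if x < q s then f₁ s x else f₂ s x) =ᶠ[𝓝 t]
      fun s => (∫ x in a..q s, f₁ s x) + ((∫ x in a..b, f₂ s x) - ∫ x in a..q s, f₂ s x) := by
    filter_upwards [hq.continuousAt.eventually (Ioo_mem_nhds ha hb)] with s hs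
    rw [intervalIntegral_ite_lt hs.1.le hs.2.le ((hf₁.uncurry_left s).intervalIntegrable _ _)
      ((hf₂.uncurry_left s).intervalIntegrable _ _), integral_interval_sub_left
      ((hf₂.uncurry_left s).intervalIntegrable _ _) ((hf₂.uncurry_left s).intervalIntegrable _ _)]
  convert ((hasDerivAt_intervalIntegral_param_upper hf₁ hf₁' hd₁ a hq).add
    ((hasDerivAt_intervalIntegral_param (hf₂.uncurry_left ·) hf₂' hd₂ a b t).sub
      (hasDerivAt_intervalIntegral_param_upper hf₂ hf₂' hd₂ a hq))).congr_of_eventuallyEq hsplit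
    using 1
  rw [← integral_interval_sub_left ((hf₂'.uncurry_left t).intervalIntegrable _ _)
    ((hf₂'.uncurry_left t).intervalIntegrable _ _), smul_sub]
  abel

end Leibniz

theorem generalized_rankine_hugoniot_1d_general
    (T : ℝ)
    (p : ℝ → ℝ) (hp : ContDiff ℝ 1 p)
    (ψ1 ψ2 v1 v2 j1 j2 : ℝ → ℝ → ℝ)
    (hψ1 : ContDiff ℝ 1 (fun q : ℝ × ℝ => ψ1 q.1 q.2))
    (hψ2 : ContDiff ℝ 1 (fun q : ℝ × ℝ => ψ2 q.1 q.2))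
    (hv1 : ContDiff ℝ 1 (fun q : ℝ × ℝ => v1 q.1 q.2))
    (hv2 : ContDiff ℝ 1 (fun q : ℝ × ℝ => v2 q.1 q.2))
    (hj1 : ContDiff ℝ 1 (fun q : ℝ × ℝ => j1 q.1 q.2))
    (hj2 : ContDiff ℝ 1 (fun q : ℝ × ℝ => j2 q.1 q.2))
    -- the piecewise bulk fields
    (ψ v j : ℝ → ℝ → ℝ)
    (hψ : ∀ t x, ψ t x = if x < p t then ψ1 t x else ψ2 t x)
    (hv : ∀ t x, v t x = if x < p t then v1 t x else v2 t x)
    (hj : ∀ t x, j t x = if x < p t then j1 t x else j2 t x)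
    (ξ : ℝ → ℝ → ℝ) (hξ : Continuous (fun q : ℝ × ℝ => ξ q.1 q.2))
    (ψp ξp : ℝ → ℝ)
    -- the integral balance law
    (hbalance : ∀ a b : ℝ, ∀ t ∈ Set.Icc 0 T, a < p t → p t < b →
      HasDerivAt (fun s => (∫ x in a..b, ψ s x) + ψp s)
        ((ψ t a * v t a + j t a) - (ψ t b * v t b + j t b) +
          (∫ x in a..b, ξ t x) + ξp t) t) :
    ∀ t ∈ Set.Ioo 0 T,
      deriv ψp t - ξp t =
        deriv p t * (ψ2 t (p t) - ψ1 t (p t)) -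
          ((ψ2 t (p t) * v2 t (p t) + j2 t (p t)) -
            (ψ1 t (p t) * v1 t (p t) + j1 t (p t))) := by
  intro t ht
  obtain ⟨ψ1', hψ1'c, hψ1'd⟩ := hψ1.exists_continuous_hasDerivAt_fst
  obtain ⟨ψ2', hψ2'c, hψ2'd⟩ := hψ2.exists_continuous_hasDerivAt_fst
  have hp' : HasDerivAt p (deriv p t) t := (hp.differentiable one_ne_zero t).hasDerivAt
  let R : ℝ → ℝ := fun h =>
    deriv p t * (ψ2 t (p t) - ψ1 t (p t)) -
      ((ψ2 t (p t + h) * v2 t (p t + h) + j2 t (p t + h)) -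
        (ψ1 t (p t - h) * v1 t (p t - h) + j1 t (p t - h))) +
      (∫ x in p t - h..p t + h, ξ t x) - (∫ x in p t - h..p t, ψ1' t x) -
        ∫ x in p t..p t + h, ψ2' t x
  have hbalance_h : Set.EqOn (fun _ => deriv ψp t - ξp t) R (Set.Ioi 0) := by
    intro h (hh : 0 < h)
    have hbal := hbalance (p t - h) (p t + h) t (Set.Ioo_subset_Icc_self ht)
      (by linarith) (by linarith)
    simp only [hψ, hv, hj, if_pos (show p t - h < p t by linarith),
      if_neg (show ¬ p t + h < p t by linarith)] at hbal
    have hmass := hasDerivAt_intervalIntegral_ite_lt hψ1.continuous hψ2.continuous hψ1'c hψ2'c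
      hψ1'd hψ2'd hp' (a := p t - h) (b := p t + h) (by linarith) (by linarith)
    have hψp' := hbal.sub hmass
    simp only [Pi.sub_def, add_sub_cancel_left] at hψp'
    simp only [R, hψp'.deriv, smul_eq_mul]
    ring
  have hR : Continuous R := by fun_prop
  simpa [R] using hbalance_h.of_subset_closure continuousOn_const hR.continuousOn
    Set.Ioi_subset_Ici_self (closure_Ioi 0).ge (Set.self_mem_Ici (a := (0 : ℝ)))

/-- **Generalized Rankine–Hugoniot jump condition in one space dimension:**
if the integral balance law holds on every interval containing the moving singular
point `x = p(t)`, then `ψ_p'(t) − ξ_p(t) = p'(t)⟦ψ⟧ − ⟦ψv + j⟧`. -/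
theorem generalized_rankine_hugoniot_1d
    (T : ℝ) (hT : 0 < T)
    (p : ℝ → ℝ) (hp : ContDiff ℝ 1 p)
    (ψ1 ψ2 v1 v2 j1 j2 : ℝ → ℝ → ℝ)
    (hψ1 : ContDiff ℝ 1 (fun q : ℝ × ℝ => ψ1 q.1 q.2))
    (hψ2 : ContDiff ℝ 1 (fun q : ℝ × ℝ => ψ2 q.1 q.2))
    (hv1 : ContDiff ℝ 1 (fun q : ℝ × ℝ => v1 q.1 q.2))
    (hv2 : ContDiff ℝ 1 (fun q : ℝ × ℝ => v2 q.1 q.2))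
    (hj1 : ContDiff ℝ 1 (fun q : ℝ × ℝ => j1 q.1 q.2))
    (hj2 : ContDiff ℝ 1 (fun q : ℝ × ℝ => j2 q.1 q.2))
    -- the piecewise bulk fields
    (ψ v j : ℝ → ℝ → ℝ)
    (hψ : ∀ t x, ψ t x = if x < p t then ψ1 t x else ψ2 t x)
    (hv : ∀ t x, v t x = if x < p t then v1 t x else v2 t x)
    (hj : ∀ t x, j t x = if x < p t then j1 t x else j2 t x)
    (ξ : ℝ → ℝ → ℝ) (hξ : Continuous (fun q : ℝ × ℝ => ξ q.1 q.2))
    (ψp ξp : ℝ → ℝ) (hψp : ContDiff ℝ 1 ψp)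
    -- the integral balance law
    (hbalance : ∀ a b : ℝ, ∀ t ∈ Set.Icc 0 T, a < p t → p t < b →
      HasDerivAt (fun s => (∫ x in a..b, ψ s x) + ψp s)
        ((ψ t a * v t a + j t a) - (ψ t b * v t b + j t b) +
          (∫ x in a..b, ξ t x) + ξp t) t) :
    ∀ t ∈ Set.Ioo 0 T,
      deriv ψp t - ξp t =
        deriv p t * (ψ2 t (p t) - ψ1 t (p t)) -
          ((ψ2 t (p t) * v2 t (p t) + j2 t (p t)) -
            (ψ1 t (p t) * v1 t (p t) + j1 t (p t))) :=
  generalized_rankine_hugoniot_1d_general T p hp ψ1 ψ2 v1 v2 j1 j2 hψ1 hψ2 hv1 hv2 hj1 hj2 ψ v j hψ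
    hv hj ξ hξ ψp ξp hbalance
end
end
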